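/- arXiv:1804.00992 — 2 statements merged into one kernel-verified Lean document; each statement's English description precedes it below -/
import Mathlib

section
/- Let n, m, d be positive integers with m ≤ n, and set k = nd and r = md. Then the map h given by B = {a_1, ..., a_m} ↦ A = {a_i + jn : 1 ≤ i ≤ m, 0 ≤ j ≤ d-1} (taken modulo k) is a bijection from 𝒜_n(m,n) onto 𝒜_n(r,k); in particular, |𝒜_n(m,n)| = |𝒜_n(r,k)|. -/
open Finset

/-- The set of residues of `A` modulo `k`. -/
def resSet (k : ℕ) (A : Finset ℕ) : Finset ℕ := A.image (· % k)

/-- The set `A + t = {a + t : a ∈ A}`. -/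
def shiftSet (A : Finset ℕ) (t : ℕ) : Finset ℕ := A.image (· + t)

/-- Two finite sets of naturals are equal modulo `k` if they have the same residues mod `k`. -/
def eqMod (k : ℕ) (A B : Finset ℕ) : Prop := resSet k A = resSet k B

/-- `fk k A` is the least positive `l` with `A + l` equal to `A` modulo `k`. -/
noncomputable def fk (k : ℕ) (A : Finset ℕ) : ℕ :=
  sInf {l : ℕ | 0 < l ∧ eqMod k (shiftSet A l) A}

/-- `𝒜(j, i)`: the collection of all `j`-element subsets of `{0, 1, ..., i-1}`. -/
def Acoll (j i : ℕ) : Finset (Finset ℕ) :=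
  (Finset.range i).powerset.filter (fun A => A.card = j)

open scoped Classical in
/-- `𝒜_s(j, i)`: the members `A` of `𝒜(j, i)` with `f_i(A) = s`. -/
noncomputable def Asub (s j i : ℕ) : Finset (Finset ℕ) :=
  (Acoll j i).filter (fun A => fk i A = s)

/-- The orbit of `A` under shifting modulo `k`: the residue sets of `A + j`, `0 ≤ j < k`.
Two subsets of `{0, ..., k-1}` are `k`-equivalent iff their orbits coincide. -/
def orb (k : ℕ) (A : Finset ℕ) : Finset (Finset ℕ) :=
  (Finset.range k).image (fun j => resSet k (shiftSet A j))

/-- `|𝒫_n(r, k)|`: the number of `k`-equivalence classes of `𝒜_n(r, k)`. -/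
noncomputable def numClasses (n r k : ℕ) : ℕ := ((Asub n r k).image (orb k)).card

/-! ### Auxiliary lemmas -/

/-- The "lift" of a set `B ⊆ {0,...,n-1}` to `{b + j*n : b ∈ B, j < d}`. -/
def liftSet (n d : ℕ) (B : Finset ℕ) : Finset ℕ :=
  (B ×ˢ Finset.range d).image (fun p => p.1 + p.2 * n)

lemma mem_liftSet {n d x : ℕ} {B : Finset ℕ} :
    x ∈ liftSet n d B ↔ ∃ b ∈ B, ∃ j < d, b + j * n = x := by
  simp [liftSet, Finset.mem_product]
  tauto

lemma resSet_eq_self {k : ℕ} {A : Finset ℕ} (h : A ⊆ Finset.range k) : resSet k A = A := by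
  ext x
  simp only [resSet, mem_image]
  constructor
  · rintro ⟨a, ha, rfl⟩; rwa [Nat.mod_eq_of_lt (mem_range.mp (h ha))]
  · intro hx; exact ⟨x, hx, Nat.mod_eq_of_lt (mem_range.mp (h hx))⟩

lemma small_lt {n d c j : ℕ} (hc : c < n) (hj : j < d) : c + j * n < n * d :=
  calc c + j * n < n + j * n := by omega
  _ = (j + 1) * n := by ring
  _ ≤ d * n := Nat.mul_le_mul_right n hj
  _ = n * d := Nat.mul_comm d n

lemma mod_key {n d c t : ℕ} (hc : c < n) (hd : 0 < d) :
    (c + t * n) % (n * d) = c + t % d * n := by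
  have h1 : c + t * n = c + t % d * n + (n * d) * (t / d) := by
    conv_lhs => rw [← Nat.mod_add_div t d]
    ring
  rw [h1, Nat.add_mul_mod_self_left, Nat.mod_eq_of_lt (small_lt hc (Nat.mod_lt t hd))]

lemma liftSet_subset_range {n d : ℕ} {B : Finset ℕ} (hB : B ⊆ Finset.range n) :
    liftSet n d B ⊆ Finset.range (n * d) := by
  intro x hx
  rw [mem_liftSet] at hx
  obtain ⟨b, hb, j, hj, rfl⟩ := hx
  exact mem_range.mpr (small_lt (mem_range.mp (hB hb)) hj)

lemma card_liftSet {n d : ℕ} (hn : 0 < n) {B : Finset ℕ} (hB : B ⊆ Finset.range n) :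
    (liftSet n d B).card = B.card * d := by
  rw [liftSet, Finset.card_image_of_injOn, Finset.card_product, Finset.card_range]
  intro p hp q hq hpq
  simp only [Finset.mem_coe, Finset.mem_product] at hp hq
  have hp1 : p.1 < n := mem_range.mp (hB hp.1)
  have hq1 : q.1 < n := mem_range.mp (hB hq.1)
  simp only at hpq
  have h1 : p.1 = q.1 := by
    have := congrArg (· % n) hpq
    simpa [Nat.add_mul_mod_self_right, Nat.mod_eq_of_lt hp1, Nat.mod_eq_of_lt hq1] using this
  have h2 : p.2 = q.2 := by
    rw [h1] at hpq
    have : p.2 * n = q.2 * n := by omega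
    exact Nat.eq_of_mul_eq_mul_right hn this
  exact Prod.ext h1 h2

lemma eqMod_iff {k l : ℕ} {A : Finset ℕ} :
    eqMod k (shiftSet A l) A ↔ A.image (fun a => (a + l) % k) = resSet k A := by
  unfold eqMod shiftSet resSet
  rw [Finset.image_image]
  rfl

lemma eqMod_shift_self (k : ℕ) (A : Finset ℕ) : eqMod k (shiftSet A k) A := by
  rw [eqMod_iff]
  unfold resSet
  apply Finset.image_congr
  intro a _
  simp [Nat.add_mod_right]

lemma fk_mem {k : ℕ} (hk : 0 < k) (A : Finset ℕ) :
    0 < fk k A ∧ eqMod k (shiftSet A (fk k A)) A :=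
  Nat.sInf_mem (⟨k, hk, eqMod_shift_self k A⟩ :
    {l : ℕ | 0 < l ∧ eqMod k (shiftSet A l) A}.Nonempty)

lemma fk_le {k l : ℕ} {A : Finset ℕ} (hl : 0 < l) (h : eqMod k (shiftSet A l) A) :
    fk k A ≤ l := Nat.sInf_le ⟨hl, h⟩

lemma mem_Asub {s j i : ℕ} {A : Finset ℕ} :
    A ∈ Asub s j i ↔ A ⊆ Finset.range i ∧ A.card = j ∧ fk i A = s := by
  simp [Asub, Acoll, Finset.mem_filter, Finset.mem_powerset, and_assoc]

lemma resSet_resSet {n k : ℕ} (h : n ∣ k) (X : Finset ℕ) :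
    (resSet k X).image (· % n) = resSet n X := by
  unfold resSet
  rw [Finset.image_image]
  apply Finset.image_congr
  intro a _
  exact Nat.mod_mod_of_dvd a h

lemma mem_resSet_shift {n l x : ℕ} {X : Finset ℕ} :
    x ∈ resSet n (shiftSet X l) ↔ ∃ a ∈ X, (a + l) % n = x := by
  simp [resSet, shiftSet]

lemma resSet_n_shift_lift {n d l : ℕ} (hd : 0 < d) (B : Finset ℕ) :
    resSet n (shiftSet (liftSet n d B) l) = resSet n (shiftSet B l) := by
  ext x
  rw [mem_resSet_shift, mem_resSet_shift]
  constructor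
  · rintro ⟨a, ha, rfl⟩
    rw [mem_liftSet] at ha
    obtain ⟨b, hb, j, hj, rfl⟩ := ha
    refine ⟨b, hb, ?_⟩
    have : b + j * n + l = b + l + j * n := by ring
    rw [this, Nat.add_mul_mod_self_right]
  · rintro ⟨b, hb, rfl⟩
    exact ⟨b, mem_liftSet.mpr ⟨b, hb, 0, hd, by ring⟩, rfl⟩

lemma resSet_n_lift {n d : ℕ} (hd : 0 < d) (B : Finset ℕ) :
    resSet n (liftSet n d B) = resSet n B := by
  ext x
  simp only [resSet, mem_image]
  constructor
  · rintro ⟨a, ha, rfl⟩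
    rw [mem_liftSet] at ha
    obtain ⟨b, hb, j, hj, rfl⟩ := ha
    exact ⟨b, hb, by rw [Nat.add_mul_mod_self_right]⟩
  · rintro ⟨b, hb, rfl⟩
    exact ⟨b, mem_liftSet.mpr ⟨b, hb, 0, hd, by ring⟩, rfl⟩

lemma eqMod_descend {n d l : ℕ} (hd : 0 < d) {B : Finset ℕ}
    (h : eqMod (n * d) (shiftSet (liftSet n d B) l) (liftSet n d B)) :
    eqMod n (shiftSet B l) B := by
  unfold eqMod at h ⊢
  have := congrArg (fun X => X.image (· % n)) h
  simp only [resSet_resSet ⟨d, rfl⟩] at this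
  rwa [resSet_n_shift_lift hd, resSet_n_lift hd] at this

lemma injOn_addmod {k l : ℕ} {A : Finset ℕ} (hA : A ⊆ Finset.range k) :
    Set.InjOn (fun a => (a + l) % k) ↑A := by
  intro a ha b hb hab
  simp only at hab
  have : a % k = b % k := Nat.ModEq.add_right_cancel' l hab
  rwa [Nat.mod_eq_of_lt (mem_range.mp (hA ha)), Nat.mod_eq_of_lt (mem_range.mp (hA hb))] at this

lemma eqMod_ascend {n d l : ℕ} (hn : 0 < n) (hd : 0 < d) {B : Finset ℕ}
    (hB : B ⊆ Finset.range n) (h : eqMod n (shiftSet B l) B) :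
    eqMod (n * d) (shiftSet (liftSet n d B) l) (liftSet n d B) := by
  have hBimg : B.image (fun b => (b + l) % n) = B := by
    rw [eqMod_iff, resSet_eq_self hB] at h
    exact h
  rw [eqMod_iff, resSet_eq_self (liftSet_subset_range hB)]
  apply Finset.eq_of_subset_of_card_le
  · intro x hx
    obtain ⟨a, ha, rfl⟩ := Finset.mem_image.mp hx
    rw [mem_liftSet] at ha
    obtain ⟨b, hb, j, hj, rfl⟩ := ha
    have hc : (b + l) % n < n := Nat.mod_lt _ hn
    have hsplit : b + j * n + l = (b + l) % n + ((b + l) / n + j) * n := by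
      have := Nat.mod_add_div (b + l) n
      ring_nf
      ring_nf at this
      omega
    rw [hsplit, mod_key hc hd]
    exact mem_liftSet.mpr ⟨(b + l) % n, hBimg ▸ Finset.mem_image_of_mem _ hb,
      ((b + l) / n + j) % d, Nat.mod_lt _ hd, rfl⟩
  · rw [Finset.card_image_of_injOn (injOn_addmod (liftSet_subset_range hB))]

lemma shiftClosure {k n : ℕ} {A : Finset ℕ} (hA : A ⊆ Finset.range k)
    (hper : A.image (fun a => (a + n) % k) = A) :
    ∀ t, ∀ a ∈ A, (a + t * n) % k ∈ A := by
  intro t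
  induction t with
  | zero =>
    intro a ha
    simpa [Nat.mod_eq_of_lt (mem_range.mp (hA ha))] using ha
  | succ t ih =>
    intro a ha
    have h1 : (a + t * n) % k ∈ A := ih a ha
    have h2 : ((a + t * n) % k + n) % k ∈ A := hper ▸ Finset.mem_image_of_mem _ h1
    have h3 : ((a + t * n) % k + n) % k = (a + (t + 1) * n) % k := by
      rw [Nat.mod_add_mod]
      congr 1
      ring
    rwa [h3] at h2

lemma A_eq_lift {n d : ℕ} (hn : 0 < n) (hd : 0 < d) {A : Finset ℕ}
    (hA : A ⊆ Finset.range (n * d))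
    (hper : A.image (fun a => (a + n) % (n * d)) = A) :
    A = liftSet n d (A.filter (· < n)) := by
  ext x
  rw [mem_liftSet]
  constructor
  · intro hx
    set q := x / n with hqdef
    set r := x % n with hrdef
    have hr : r < n := Nat.mod_lt _ hn
    have hq : x = r + q * n := by rw [hrdef, hqdef, Nat.mod_add_div']
    have hqd : q < d := by
      rw [hqdef]
      rw [Nat.div_lt_iff_lt_mul hn]
      calc x < n * d := mem_range.mp (hA hx)
      _ = d * n := Nat.mul_comm n d
    have h1 : x + (d - q) * n = r + n * d := by
      rw [hq, add_assoc, ← add_mul, Nat.add_sub_cancel' hqd.le, mul_comm d n]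
    have h2 : (x + (d - q) * n) % (n * d) = r := by
      rw [h1, Nat.add_mod_right,
        Nat.mod_eq_of_lt (lt_of_lt_of_le hr (Nat.le_mul_of_pos_right n hd))]
    have hrA : r ∈ A := h2 ▸ shiftClosure hA hper (d - q) x hx
    exact ⟨r, Finset.mem_filter.mpr ⟨hrA, hr⟩, q, hqd, hq.symm⟩
  · rintro ⟨b, hb, j, hj, rfl⟩
    obtain ⟨hbA, hbn⟩ := Finset.mem_filter.mp hb
    have := shiftClosure hA hper j b hbA
    rwa [Nat.mod_eq_of_lt (small_lt hbn hj)] at this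

/-- for `k = n * d`, `r = m * d`, the map
`B ↦ {a + j * n : a ∈ B, 0 ≤ j ≤ d - 1}` (taken modulo `k`) is a bijection from
`𝒜_n(m, n)` onto `𝒜_n(r, k)`; in particular `|𝒜_n(m, n)| = |𝒜_n(r, k)|`. -/
theorem bijection_Asub (n m d : ℕ) (hn : 0 < n) (hm : 0 < m) (hd : 0 < d) (hmn : m ≤ n) :
    Set.BijOn
      (fun B : Finset ℕ =>
        resSet (n * d) ((B ×ˢ Finset.range d).image (fun p => p.1 + p.2 * n)))
      ↑(Asub n m n) ↑(Asub n (m * d) (n * d)) ∧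
    (Asub n m n).card = (Asub n (m * d) (n * d)).card := by
  have hk : 0 < n * d := Nat.mul_pos hn hd
  set f : Finset ℕ → Finset ℕ :=
    fun B => resSet (n * d) ((B ×ˢ Finset.range d).image (fun p => p.1 + p.2 * n)) with hf
  have hfeq : ∀ {B : Finset ℕ}, B ⊆ Finset.range n → f B = liftSet n d B := by
    intro B hB
    exact resSet_eq_self (liftSet_subset_range hB)
  -- forward: fk is preserved
  have hfk_fwd : ∀ {B : Finset ℕ}, B ⊆ Finset.range n → fk n B = n →
      fk (n * d) (liftSet n d B) = n := by
    intro B hB hfkB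
    apply le_antisymm
    · have h0 : eqMod n (shiftSet B n) B := by
        have := (fk_mem hn B).2; rwa [hfkB] at this
      exact fk_le hn (eqMod_ascend hn hd hB h0)
    · obtain ⟨hpos, heq⟩ := fk_mem hk (liftSet n d B)
      have := fk_le hpos (eqMod_descend hd heq)
      omega
  have hmaps : ∀ B ∈ Asub n m n, f B ∈ Asub n (m * d) (n * d) := by
    intro B hB
    obtain ⟨hBr, hBc, hBf⟩ := mem_Asub.mp hB
    rw [hfeq hBr, mem_Asub]
    exact ⟨liftSet_subset_range hBr, by rw [card_liftSet hn hBr, hBc], hfk_fwd hBr hBf⟩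
  have hinj : ∀ B ∈ Asub n m n, ∀ B' ∈ Asub n m n, f B = f B' → B = B' := by
    intro B hB B' hB' hEq
    obtain ⟨hBr, -, -⟩ := mem_Asub.mp hB
    obtain ⟨hBr', -, -⟩ := mem_Asub.mp hB'
    rw [hfeq hBr, hfeq hBr'] at hEq
    calc B = resSet n B := (resSet_eq_self hBr).symm
    _ = resSet n (liftSet n d B) := (resSet_n_lift hd B).symm
    _ = resSet n (liftSet n d B') := by rw [hEq]
    _ = resSet n B' := resSet_n_lift hd B'
    _ = B' := resSet_eq_self hBr'
  have hsurj : ∀ A ∈ Asub n (m * d) (n * d), ∃ B ∈ Asub n m n, f B = A := by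
    intro A hA
    obtain ⟨hAr, hAc, hAf⟩ := mem_Asub.mp hA
    have hper : A.image (fun a => (a + n) % (n * d)) = A := by
      have := (fk_mem hk A).2
      rw [hAf, eqMod_iff, resSet_eq_self hAr] at this
      exact this
    set B := A.filter (· < n) with hBdef
    have hAeq : A = liftSet n d B := A_eq_lift hn hd hAr hper
    have hBr : B ⊆ Finset.range n := fun x hx =>
      mem_range.mpr (Finset.mem_filter.mp hx).2
    have hBc : B.card = m := by
      have := card_liftSet (d := d) hn hBr
      rw [← hAeq, hAc] at this
      exact (Nat.eq_of_mul_eq_mul_right hd this.symm)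
    have hBf : fk n B = n := by
      apply le_antisymm
      · exact fk_le hn (eqMod_shift_self n B)
      · obtain ⟨hpos, heq⟩ := fk_mem hn B
        have := fk_le hpos (hAeq ▸ eqMod_ascend hn hd hBr heq)
        omega
    refine ⟨B, mem_Asub.mpr ⟨hBr, hBc, hBf⟩, ?_⟩
    rw [hfeq hBr, ← hAeq]
  have hbij : Set.BijOn f ↑(Asub n m n) ↑(Asub n (m * d) (n * d)) := by
    refine ⟨fun B hB => hmaps B hB, fun B hB B' hB' h => hinj B hB B' hB' h, ?_⟩
    intro A hA
    obtain ⟨B, hB, hBA⟩ := hsurj A hA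
    exact ⟨B, hB, hBA⟩
  refine ⟨hbij, Finset.card_bij (fun B _ => f B) hmaps hinj ?_⟩
  intro A hA
  obtain ⟨B, hB, hBA⟩ := hsurj A hA
  exact ⟨B, hB, hBA⟩
end

section
/- Let n, m, d be positive integers with m ≤ n, and set k = nd and r = md. Then the number of k-equivalence classes of 𝒜_n(r,k) is |𝒫_n(r,k)| = |𝒜_n(r,k)|/n = (1/n) · Σ_{s | gcd(n,m)} C(n/s, m/s) · μ(s), where the sum is over all positive divisors s of gcd(n,m). -/
/-!
Rotation by one, `A ↦ {(a + 1) mod k : a ∈ A}`, permutes the `r`-subsets of `{0, …, k-1}`: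
the `k`-equivalence classes are its orbits and `f_k(A)` is the minimal period of `A`. Every
orbit inside `𝒜_n(r, k)` therefore has exactly `n` elements, so `|𝒫_n(r, k)| · n = |𝒜_n(r, k)|`.
The sets fixed by rotation through `t` are those whose minimal period divides `t`, so Möbius
inversion expresses `|𝒜_n(r, k)|` through the numbers of sets fixed by rotation through `n / s`.
When `k = t e`, a set fixed by rotation through `t` is determined by its part `B` below `t`
and has `e · |B|` elements; for `t = n / s`, `e = s d` and `r = m d` there are `C(n/s, m/s)`
such sets if `s ∣ m`, and none otherwise.
-/

open Finset

open Function ArithmeticFunction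
open scoped ArithmeticFunction.Moebius

theorem Nat.divisors_filter_dvd_eq_divisors_gcd (m : ℕ) {n : ℕ} (hn : n ≠ 0) :
    {s ∈ n.divisors | s ∣ m} = (n.gcd m).divisors := by
  ext s
  simp only [mem_filter, Nat.mem_divisors, Nat.dvd_gcd_iff, ne_eq, Nat.gcd_eq_zero_iff, hn,
    false_and, not_false_eq_true, and_true]

section PeriodicOrbits

variable {α : Type*} [DecidableEq α] {f : α → α} {m : ℕ} {x : α}

theorem mem_image_range_iterate (hm : 0 < m) (hx : IsPeriodicPt f m x) {y : α} :
    y ∈ (range m).image (f^[·] x) ↔ ∃ j, f^[j] x = y := by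
  simp only [mem_image, mem_range]
  refine ⟨fun ⟨j, _, hj⟩ => ⟨j, hj⟩, fun ⟨j, hj⟩ => ⟨j % m, Nat.mod_lt j hm, ?_⟩⟩
  rw [hx.iterate_mod_apply, hj]

theorem card_image_range_iterate (hm : 0 < m) (hx : IsPeriodicPt f m x) :
    #((range m).image (f^[·] x)) = minimalPeriod f x := by
  have hpts : x ∈ periodicPts f := ⟨m, hm, hx⟩
  have hrange : (range m).image (f^[·] x) = (range (minimalPeriod f x)).image (f^[·] x) := by
    ext y
    rw [mem_image_range_iterate hm hx, mem_image_range_iterate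
      (minimalPeriod_pos_of_mem_periodicPts hpts) (isPeriodicPt_minimalPeriod f x)]
  rw [hrange, card_image_of_injOn (by simpa using iterate_injOn_Iio_minimalPeriod), card_range]

theorem image_range_iterate_iterate (hm : 0 < m) (hx : IsPeriodicPt f m x) (j : ℕ) :
    (range m).image (f^[·] (f^[j] x)) = (range m).image (f^[·] x) := by
  ext y
  rw [mem_image_range_iterate hm (hx.apply_iterate j), mem_image_range_iterate hm hx]
  refine ⟨fun ⟨i, hi⟩ => ⟨i + j, by rwa [iterate_add_apply]⟩, fun ⟨i, hi⟩ => ⟨i + m * j - j, ?_⟩⟩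
  have hj : j ≤ m * j := Nat.le_mul_of_pos_left j hm
  rw [← iterate_add_apply, Nat.sub_add_cancel (by omega), iterate_add_apply,
    (hx.mul_const j).eq, hi]

variable (f) in
theorem card_image_image_range_iterate_mul {s : Finset α} {n : ℕ} (hm : 0 < m)
    (hs : ∀ x ∈ s, f x ∈ s) (hper : ∀ x ∈ s, IsPeriodicPt f m x)
    (hn : ∀ x ∈ s, minimalPeriod f x = n) :
    #(s.image fun x => (range m).image (f^[·] x)) * n = #s := by
  rw [card_eq_sum_card_image (fun x => (range m).image (f^[·] x)) s]
  refine (sum_const_nat fun O hO => ?_).symm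
  obtain ⟨x, hx, rfl⟩ := mem_image.mp hO
  have hfiber : {y ∈ s | (range m).image (f^[·] y) = (range m).image (f^[·] x)} =
      (range m).image (f^[·] x) := by
    ext y
    rw [mem_filter, mem_image_range_iterate hm (hper x hx)]
    constructor
    · rintro ⟨hy, hOy⟩
      rw [← mem_image_range_iterate hm (hper x hx), ← hOy, mem_image_range_iterate hm (hper y hy)]
      exact ⟨0, rfl⟩
    · rintro ⟨j, rfl⟩
      exact ⟨Iterate.rec (· ∈ s) hx hs j, image_range_iterate_iterate hm (hper x hx) j⟩
  rw [hfiber, card_image_range_iterate hm (hper x hx), hn x hx]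

variable (f)

theorem card_filter_isPeriodicPt_eq_sum (s : Finset α) {t : ℕ} (ht : 0 < t) :
    #{x ∈ s | IsPeriodicPt f t x} = ∑ u ∈ t.divisors, #{x ∈ s | minimalPeriod f x = u} := by
  rw [card_eq_sum_card_fiberwise (f := minimalPeriod f) (t := t.divisors)]
  · simp only [filter_filter]
    refine sum_congr rfl fun u hu => congrArg card (filter_congr fun x _ => ?_)
    rw [isPeriodicPt_iff_minimalPeriod_dvd]
    exact ⟨fun h => h.2, fun h => ⟨h ▸ Nat.dvd_of_mem_divisors hu, h⟩⟩
  · intro x hx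
    simp only [coe_filter, Set.mem_ofPred_eq, isPeriodicPt_iff_minimalPeriod_dvd] at hx
    exact Nat.mem_divisors.mpr ⟨hx.2, ht.ne'⟩

theorem card_filter_minimalPeriod_eq_sum_moebius (s : Finset α) {n : ℕ} (hn : 0 < n) :
    (#{x ∈ s | minimalPeriod f x = n} : ℤ) =
      ∑ d ∈ n.divisors, μ d * #{x ∈ s | IsPeriodicPt f (n / d) x} := by
  have inversion := (sum_eq_iff_sum_mul_moebius_eq
    (f := fun u => (#{x ∈ s | minimalPeriod f x = u} : ℤ))
    (g := fun t => (#{x ∈ s | IsPeriodicPt f t x} : ℤ))).mp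
    (fun t ht => by exact_mod_cast (card_filter_isPeriodicPt_eq_sum f s ht).symm) n hn
  simp only [Int.cast_id] at inversion
  rw [← inversion, Nat.sum_divisorsAntidiagonal
    (fun d t => (μ d : ℤ) * (#{x ∈ s | IsPeriodicPt f t x} : ℤ))]

end PeriodicOrbits

def cyclicShift (k : ℕ) (A : Finset ℕ) : Finset ℕ := A.image fun a => (a + 1) % k

section CyclicShift

variable {k r : ℕ} {A : Finset ℕ}

theorem image_mod_of_subset_range (hA : A ⊆ range k) : A.image (· % k) = A := by
  calc A.image (· % k) = A.image id :=
        image_congr fun a ha => Nat.mod_eq_of_lt (mem_range.mp (hA ha))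
    _ = A := image_id

theorem resSet_shiftSet (k j : ℕ) (A : Finset ℕ) :
    resSet k (shiftSet A j) = A.image fun a => (a + j) % k := by
  rw [resSet, shiftSet, image_image]
  rfl

theorem iterate_cyclicShift (hA : A ⊆ range k) (j : ℕ) :
    (cyclicShift k)^[j] A = A.image fun a => (a + j) % k := by
  induction j with
  | zero => exact (image_mod_of_subset_range hA).symm
  | succ j ih =>
    rw [iterate_succ_apply', ih, cyclicShift, image_image]
    exact image_congr fun a _ => by simp only [comp_apply, Nat.mod_add_mod, add_assoc]

theorem image_add_mod_subset_range (hk : 0 < k) (j : ℕ) :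
    A.image (fun a => (a + j) % k) ⊆ range k := by
  intro x hx
  obtain ⟨a, -, rfl⟩ := mem_image.mp hx
  exact mem_range.mpr (Nat.mod_lt _ hk)

theorem card_image_add_mod (hA : A ⊆ range k) (j : ℕ) :
    #(A.image fun a => (a + j) % k) = #A := by
  refine card_image_of_injOn fun a ha b hb hab => ?_
  have hmod : a % k = b % k := Nat.ModEq.add_right_cancel' j hab
  rwa [Nat.mod_eq_of_lt (mem_range.mp (hA ha)), Nat.mod_eq_of_lt (mem_range.mp (hA hb))] at hmod

theorem add_mod_mem_image_add_mod (hA : A ⊆ range k) (y j : ℕ) :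
    (y + j) % k ∈ A.image (fun a => (a + j) % k) ↔ y % k ∈ A := by
  constructor
  · intro hy
    obtain ⟨a, ha, hay⟩ := mem_image.mp hy
    have hmod : a % k = y % k := Nat.ModEq.add_right_cancel' j hay
    rwa [← hmod, Nat.mod_eq_of_lt (mem_range.mp (hA ha))]
  · intro hy
    exact mem_image.mpr ⟨y % k, hy, Nat.mod_add_mod y k j⟩

theorem isPeriodicPt_cyclicShift (hA : A ⊆ range k) : IsPeriodicPt (cyclicShift k) k A := by
  rw [IsPeriodicPt, IsFixedPt, iterate_cyclicShift hA]
  simp only [Nat.add_mod_right]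
  exact image_mod_of_subset_range hA

theorem fk_eq_minimalPeriod (hA : A ⊆ range k) : fk k A = minimalPeriod (cyclicShift k) A := by
  rw [minimalPeriod_eq_sInf_n_pos_IsPeriodicPt, fk]
  congr! 3 with l
  rw [eqMod, resSet_shiftSet, resSet, image_mod_of_subset_range hA, IsPeriodicPt, IsFixedPt,
    iterate_cyclicShift hA]

theorem orb_eq_image_range_iterate (hA : A ⊆ range k) :
    orb k A = (range k).image ((cyclicShift k)^[·] A) :=
  image_congr fun j _ => by rw [resSet_shiftSet, iterate_cyclicShift hA]

theorem mem_Acoll : A ∈ Acoll r k ↔ A ⊆ range k ∧ #A = r := by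
  rw [Acoll, mem_filter, mem_powerset]

theorem cyclicShift_mem_Acoll (hk : 0 < k) (hA : A ∈ Acoll r k) : cyclicShift k A ∈ Acoll r k := by
  obtain ⟨hsub, hcard⟩ := mem_Acoll.mp hA
  rw [mem_Acoll, ← iterate_one (cyclicShift k), iterate_cyclicShift hsub]
  exact ⟨image_add_mod_subset_range hk 1, (card_image_add_mod hsub 1).trans hcard⟩

theorem Asub_eq_filter_minimalPeriod (n r k : ℕ) :
    Asub n r k = {A ∈ Acoll r k | minimalPeriod (cyclicShift k) A = n} :=
  filter_congr fun _ hA => by rw [fk_eq_minimalPeriod (mem_Acoll.mp hA).1]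

theorem cyclicShift_mem_Asub {n : ℕ} (hk : 0 < k) (hA : A ∈ Asub n r k) :
    cyclicShift k A ∈ Asub n r k := by
  rw [Asub_eq_filter_minimalPeriod, mem_filter] at hA ⊢
  have hpts : A ∈ periodicPts (cyclicShift k) :=
    ⟨k, hk, isPeriodicPt_cyclicShift (mem_Acoll.mp hA.1).1⟩
  exact ⟨cyclicShift_mem_Acoll hk hA.1, (minimalPeriod_apply hpts).trans hA.2⟩

theorem numClasses_mul (n : ℕ) (hk : 0 < k) : numClasses n r k * n = #(Asub n r k) := by
  have hrange : ∀ A ∈ Asub n r k, A ⊆ range k := fun A hA =>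
    (mem_Acoll.mp (mem_filter.mp hA).1).1
  rw [numClasses, image_congr fun A hA => orb_eq_image_range_iterate (hrange A hA)]
  refine card_image_image_range_iterate_mul _ hk (fun A => cyclicShift_mem_Asub hk)
    (fun A hA => isPeriodicPt_cyclicShift (hrange A hA)) fun A hA => ?_
  rw [← fk_eq_minimalPeriod (hrange A hA)]
  exact (mem_filter.mp hA).2

end CyclicShift

def modPreimage (k t : ℕ) (B : Finset ℕ) : Finset ℕ := {a ∈ range k | a % t ∈ B}

section PeriodicSubsets

variable {t e r : ℕ} {A B : Finset ℕ}

theorem card_modPreimage (ht : 0 < t) (hB : B ⊆ range t) :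
    #(modPreimage (t * e) t B) = #B * e := by
  rw [show #B * e = #(B ×ˢ range e) by rw [card_product, card_range]]
  refine card_bij' (fun a _ => (a % t, a / t)) (fun p _ => p.1 + t * p.2) ?_ ?_ ?_ ?_
  · intro a ha
    simp only [modPreimage, mem_filter, mem_range] at ha
    exact mem_product.mpr ⟨ha.2, mem_range.mpr (Nat.div_lt_of_lt_mul ha.1)⟩
  · rintro ⟨b, i⟩ hbi
    obtain ⟨hbB, hi⟩ := mem_product.mp hbi
    have hb : b < t := mem_range.mp (hB hbB)
    simp only [modPreimage, mem_filter, mem_range, Nat.add_mul_mod_self_left,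
      Nat.mod_eq_of_lt hb]
    refine ⟨?_, hbB⟩
    calc b + t * i < t + t * i := by omega
      _ = t * (i + 1) := by ring
      _ ≤ t * e := Nat.mul_le_mul_left t (mem_range.mp hi)
  · intro a _
    exact Nat.mod_add_div a t
  · rintro ⟨b, i⟩ hbi
    have hb : b < t := mem_range.mp (hB (mem_product.mp hbi).1)
    simp only [Nat.add_mul_mod_self_left, Nat.mod_eq_of_lt hb, Nat.add_mul_div_left _ _ ht,
      Nat.div_eq_of_lt hb, zero_add]

theorem isPeriodicPt_modPreimage (t e : ℕ) (B : Finset ℕ) :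
    IsPeriodicPt (cyclicShift (t * e)) t (modPreimage (t * e) t B) := by
  have hsub : modPreimage (t * e) t B ⊆ range (t * e) := filter_subset _ _
  rw [IsPeriodicPt, IsFixedPt, iterate_cyclicShift hsub]
  refine eq_of_subset_of_card_le (fun x hx => ?_) (card_image_add_mod hsub t).ge
  obtain ⟨a, ha, rfl⟩ := mem_image.mp hx
  simp only [modPreimage, mem_filter, mem_range] at ha ⊢
  refine ⟨Nat.mod_lt _ (by omega), ?_⟩
  rw [Nat.mod_mod_of_dvd _ (dvd_mul_right t e), Nat.add_mod_right]
  exact ha.2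

theorem periodic_mem_of_isPeriodicPt {k : ℕ} (hA : A ⊆ range k)
    (h : IsPeriodicPt (cyclicShift k) t A) : Periodic (fun y => y % k ∈ A) t := fun y => by
  have hA' := h.eq
  rw [iterate_cyclicShift hA] at hA'
  conv_lhs => rw [← hA']
  exact propext (add_mod_mem_image_add_mod hA y t)

theorem eq_modPreimage_of_isPeriodicPt (hA : A ⊆ range (t * e))
    (h : IsPeriodicPt (cyclicShift (t * e)) t A) :
    A = modPreimage (t * e) t {a ∈ A | a < t} := by
  have hmem : ∀ a < t * e, a % t ∈ A ↔ a ∈ A := fun a hak => by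
    have hper := (periodic_mem_of_isPeriodicPt hA h).map_mod_nat a
    simp only [Nat.mod_eq_of_lt hak, Nat.mod_eq_of_lt ((Nat.mod_le a t).trans_lt hak)] at hper
    rw [hper]
  ext a
  simp only [modPreimage, mem_filter, mem_range]
  constructor
  · intro ha
    have hak : a < t * e := mem_range.mp (hA ha)
    exact ⟨hak, (hmem a hak).mpr ha, Nat.mod_lt a (Nat.pos_of_mul_pos_right (by omega : 0 < t * e))⟩
  · rintro ⟨hak, ha, -⟩
    exact (hmem a hak).mp ha

theorem filter_lt_modPreimage (he : 0 < e) (hB : B ⊆ range t) :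
    {a ∈ modPreimage (t * e) t B | a < t} = B := by
  ext b
  simp only [modPreimage, mem_filter, mem_range]
  constructor
  · rintro ⟨⟨-, hb⟩, hbt⟩
    rwa [Nat.mod_eq_of_lt hbt] at hb
  · intro hb
    have hbt : b < t := mem_range.mp (hB hb)
    exact ⟨⟨hbt.trans_le (Nat.le_mul_of_pos_right t he), by rwa [Nat.mod_eq_of_lt hbt]⟩, hbt⟩

theorem card_filter_isPeriodicPt_Acoll (ht : 0 < t) (he : 0 < e) :
    #{A ∈ Acoll r (t * e) | IsPeriodicPt (cyclicShift (t * e)) t A} =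
      #{B ∈ (range t).powerset | #B * e = r} := by
  refine card_bij' (fun A _ => {a ∈ A | a < t}) (fun B _ => modPreimage (t * e) t B) ?_ ?_ ?_ ?_
  · intro A hA
    obtain ⟨⟨hsub, hcard⟩, hper⟩ := (mem_filter.trans (and_congr_left' mem_Acoll)).mp hA
    have hsub' : {a ∈ A | a < t} ⊆ range t := fun a ha => mem_range.mpr (mem_filter.mp ha).2
    refine mem_filter.mpr ⟨mem_powerset.mpr hsub', ?_⟩
    rw [← card_modPreimage ht hsub', ← eq_modPreimage_of_isPeriodicPt hsub hper, hcard]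
  · intro B hB
    obtain ⟨hsub, hcard⟩ := (mem_filter.trans (and_congr_left' mem_powerset)).mp hB
    exact mem_filter.mpr ⟨mem_Acoll.mpr ⟨filter_subset _ _, (card_modPreimage ht hsub).trans hcard⟩,
      isPeriodicPt_modPreimage t e B⟩
  · intro A hA
    obtain ⟨hA, hper⟩ := mem_filter.mp hA
    exact (eq_modPreimage_of_isPeriodicPt (mem_Acoll.mp hA).1 hper).symm
  · intro B hB
    exact filter_lt_modPreimage he (mem_powerset.mp (mem_filter.mp hB).1)

theorem card_filter_powerset_card_mul_eq (t : ℕ) (he : 0 < e) :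
    #{B ∈ (range t).powerset | #B * e = r} = if e ∣ r then t.choose (r / e) else 0 := by
  split_ifs with hdvd
  · obtain ⟨c, rfl⟩ := hdvd
    rw [Nat.mul_div_cancel_left c he]
    calc #{B ∈ (range t).powerset | #B * e = e * c} = #(powersetCard c (range t)) := by
          rw [powersetCard_eq_filter]
          exact congrArg card (filter_congr fun B _ => by rw [mul_comm, Nat.mul_right_inj he.ne'])
      _ = t.choose c := by rw [card_powersetCard, card_range]
  · refine card_eq_zero.mpr (filter_eq_empty_iff.mpr fun B _ hB => hdvd ⟨#B, ?_⟩)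
    rw [← hB, mul_comm]

end PeriodicSubsets

theorem card_filter_isPeriodicPt_div {n m d s : ℕ} (hn : 0 < n) (hd : 0 < d) (hs : s ∣ n) :
    #{A ∈ Acoll (m * d) (n * d) | IsPeriodicPt (cyclicShift (n * d)) (n / s) A} =
      if s ∣ m then (n / s).choose (m / s) else 0 := by
  have hs0 : 0 < s := Nat.pos_of_dvd_of_pos hs hn
  have hk : n * d = n / s * (s * d) := by rw [← mul_assoc, Nat.div_mul_cancel hs]
  rw [hk, card_filter_isPeriodicPt_Acoll (Nat.div_pos (Nat.le_of_dvd hn hs) hs0)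
    (Nat.mul_pos hs0 hd), card_filter_powerset_card_mul_eq _ (Nat.mul_pos hs0 hd),
    Nat.mul_div_mul_right m s hd]
  exact if_congr (Nat.mul_dvd_mul_iff_right hd) rfl rfl

theorem card_classes_general (n m d : ℕ) (hn : 0 < n) (hd : 0 < d) :
    numClasses n (m * d) (n * d) * n = (Asub n (m * d) (n * d)).card ∧
    ((numClasses n (m * d) (n * d) * n : ℕ) : ℤ) =
      ∑ s ∈ (Nat.gcd n m).divisors,
        ((n / s).choose (m / s) : ℤ) * ArithmeticFunction.moebius s := by
  have hcard := numClasses_mul n (r := m * d) (Nat.mul_pos hn hd)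
  refine ⟨hcard, ?_⟩
  rw [hcard, Asub_eq_filter_minimalPeriod, card_filter_minimalPeriod_eq_sum_moebius _ _ hn,
    ← Nat.divisors_filter_dvd_eq_divisors_gcd m hn.ne', sum_filter]
  refine sum_congr rfl fun s hs => ?_
  rw [card_filter_isPeriodicPt_div hn hd (Nat.dvd_of_mem_divisors hs)]
  split_ifs <;> simp [mul_comm]

/-- for `k = n * d`, `r = m * d`, the number of `k`-equivalence classes of
`𝒜_n(r, k)` satisfies `|𝒫_n(r, k)| · n = |𝒜_n(r, k)| = ∑_{s ∣ gcd(n, m)} C(n/s, m/s) μ(s)`. -/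
theorem card_classes (n m d : ℕ) (hn : 0 < n) (hm : 0 < m) (hd : 0 < d) (hmn : m ≤ n) :
    numClasses n (m * d) (n * d) * n = (Asub n (m * d) (n * d)).card ∧
    ((numClasses n (m * d) (n * d) * n : ℕ) : ℤ) =
      ∑ s ∈ (Nat.gcd n m).divisors,
        ((n / s).choose (m / s) : ℤ) * ArithmeticFunction.moebius s :=
  card_classes_general n m d hn hd
end
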